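/- Probability mass function of the balls-into-bins mechanism: let m, s, k, n be positive integers with s ≤ m, p ∈ [0,1], and let S ⊆ [m] with |S| = s. Let M(S) be the random occupancy vector in ℕ^m produced by the balls-into-bins mechanism M^BIB(m,s,k,n,p) on input S. Then for any vector W = (w₁,…,w_m) ∈ ℕ^m with total w = w₁ + ⋯ + w_m satisfying 1 + k ≤ w ≤ 1 + k + n, Pr[M(S) = W] = C(n, w−1−k) · p^{w−1−k} · (1−p)^{n−w+1+k} · ((w−1)! / (s · ∏_{i=1}^m w_i!)) · m^{−(w−1)} · (∑_{i∈S} w_i), where C(n, j) denotes the binomial coefficient. -/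

import Mathlib

open scoped ENNReal

noncomputable def uniformBin (m : ℕ) (hm : 0 < m) : PMF (Fin m) :=
  PMF.uniformOfFinset Finset.univ
    (Finset.univ_nonempty_iff.mpr (Fin.pos_iff_nonempty.mp hm))

/-- Sum of `n` independent copies of a random multiset. -/
noncomputable def repeatMultiset {α : Type*} (ν : PMF (Multiset α)) : ℕ → PMF (Multiset α)
  | 0 => PMF.pure 0
  | n + 1 => ν.bind fun s => (repeatMultiset ν n).map (s + ·)

/-- `PMF.bernoulli` with its older signature (`p : ℝ≥0∞`). -/
noncomputable def bernoulliENNReal (p : ℝ≥0∞) (h : p ≤ 1) : PMF Bool :=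
  PMF.ofFintype (fun b => cond b p (1 - p)) (by simp [h])

/-- With probability `p`, one draw from `ν`; otherwise nothing. -/
noncomputable def trialM {α : Type*} (ν : PMF α) (p : ℝ≥0∞) (hp : p ≤ 1) : PMF (Multiset α) :=
  (bernoulliENNReal p hp).bind fun b => if b then ν.map (fun x => {x}) else PMF.pure 0

/-- The balls-into-bins mechanism. -/
noncomputable def MBIB (m k n : ℕ) (hm : 0 < m) (p : ℝ≥0∞) (hp : p ≤ 1)
    (S : Finset (Fin m)) (hS : S.Nonempty) : PMF (Multiset (Fin m)) :=
  (PMF.uniformOfFinset S hS).bind fun x =>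
    (repeatMultiset ((uniformBin m hm).map (fun y => {y})) k).bind fun A =>
      (repeatMultiset (trialM (uniformBin m hm) p hp) n).map fun C => {x} + A + C

/-!
Condition on the bin `x ∈ S` of the real ball. The other `w - 1` balls are the `k` noisy ones
together with the successful trials, whose number `w - 1 - k` is binomial. Given their number `t`,
balls thrown independently with law `ν` have the multinomial law: occupancy `B` has probability
`B.countPerms * ∏ b ∈ B, ν b`, by induction on `t` through the recursion
`∑ y ∈ B, (B.erase y).countPerms = B.countPerms` (classify arrangements by their first ball).
For uniform bins this is `countPerms (B.erase x) / m ^ (w - 1)`, and averaging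
`countPerms (B.erase x) = (w - 1)! * B.count x / ∏ i, (B.count i)!` over `x ∈ S` gives the formula.
-/

open Multiset

namespace Multiset

variable {α : Type*} [DecidableEq α]

theorem countPerms_mul_prod_factorial (B : Multiset α) {s : Finset α} (hs : B.toFinset ⊆ s) :
    B.countPerms * ∏ i ∈ s, (B.count i).factorial = (card B).factorial := by
  have h := Nat.multinomial_spec s (toFinsupp B)
  simp only [toFinsupp_apply] at h
  rw [sum_count_eq_card fun a ha => hs (mem_toFinset.mpr ha)] at h
  rw [countPerms, Finsupp.multinomial_eq_of_support_subset (s := s) (by rwa [toFinsupp_support]),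
    mul_comm, h]

theorem countPerms_erase_mul_prod_factorial {B : Multiset α} {y : α} (hy : y ∈ B) {s : Finset α}
    (hs : B.toFinset ⊆ s) :
    (B.erase y).countPerms * ∏ i ∈ s, (B.count i).factorial =
      (card B - 1).factorial * B.count y := by
  have hys : y ∈ s := hs (mem_toFinset.mpr hy)
  have hrest : ∏ i ∈ s.erase y, (B.count i).factorial =
      ∏ i ∈ s.erase y, ((B.erase y).count i).factorial :=
    Finset.prod_congr rfl fun i hi => by rw [count_erase_of_ne (Finset.ne_of_mem_erase hi)]
  rw [show card B - 1 = card (B.erase y) by rw [card_erase_of_mem hy]; rfl,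
    ← (B.erase y).countPerms_mul_prod_factorial ((toFinset_subset.mpr (erase_subset y B)).trans hs),
    ← Finset.mul_prod_erase s _ hys,
    ← Finset.mul_prod_erase s (fun i => ((B.erase y).count i).factorial) hys, count_erase_self,
    hrest, ← Nat.mul_factorial_pred (count_pos.mpr hy).ne']
  ring

theorem sum_countPerms_erase_mul_prod_factorial (B : Multiset α) (S : Finset α) {s : Finset α}
    (hs : B.toFinset ⊆ s) :
    (∑ x ∈ S ∩ B.toFinset, (B.erase x).countPerms) * ∏ i ∈ s, (B.count i).factorial =
      (card B - 1).factorial * ∑ x ∈ S, B.count x := by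
  rw [Finset.sum_mul, Finset.sum_congr rfl fun x hx => countPerms_erase_mul_prod_factorial
      (mem_toFinset.mp (Finset.mem_inter.mp hx).2) hs, ← Finset.mul_sum,
    Finset.sum_subset Finset.inter_subset_left fun x _ hx => count_eq_zero.mpr fun hxB =>
      hx (Finset.mem_inter.mpr ⟨‹_›, mem_toFinset.mpr hxB⟩)]

theorem sum_countPerms_erase {B : Multiset α} (hB : B ≠ 0) :
    ∑ y ∈ B.toFinset, (B.erase y).countPerms = B.countPerms := by
  refine Nat.eq_of_mul_eq_mul_right
    (Finset.prod_pos fun i _ => (B.count i).factorial_pos : 0 < ∏ i ∈ B.toFinset, _) ?_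
  have := B.sum_countPerms_erase_mul_prod_factorial B.toFinset subset_rfl
  rw [Finset.inter_self, toFinset_sum_count_eq] at this
  rw [this, countPerms_mul_prod_factorial B subset_rfl, mul_comm,
    Nat.mul_factorial_pred (card_pos.mpr hB).ne']

end Multiset

theorem choose_succ_succ_mul_pow_mul_pow {R : Type*} [CommSemiring R] (p q : R) (n j : ℕ) :
    p * (n.choose j * p ^ j * q ^ (n - j)) +
        q * (n.choose (j + 1) * p ^ (j + 1) * q ^ (n - (j + 1))) =
      (n + 1).choose (j + 1) * p ^ (j + 1) * q ^ (n - j) := by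
  rw [Nat.choose_succ_succ', Nat.cast_add]
  rcases lt_or_ge j n with hjn | hnj
  · rw [show n - j = n - (j + 1) + 1 by omega]
    ring
  · rw [Nat.choose_eq_zero_of_lt (show n < j + 1 by omega)]
    ring

namespace PMF

variable {α β : Type*}

theorem map_apply_of_injective (μ : PMF α) {f : α → β} (hf : Function.Injective f) (a : α) :
    μ.map f (f a) = μ a := by
  rw [map_apply, tsum_eq_single a fun b hb => if_neg fun h => hb (hf h).symm, if_pos rfl]

variable [DecidableEq α]

theorem map_add_left_apply (μ : PMF (Multiset α)) (A B : Multiset α) :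
    μ.map (A + ·) B = if A ≤ B then μ (B - A) else 0 := by
  rw [map_apply]
  split_ifs with hAB
  · refine (tsum_eq_single (B - A) fun C hC => if_neg fun hBC => hC ?_).trans
      (if_pos (add_tsub_cancel_of_le hAB).symm)
    rw [hBC, add_tsub_cancel_left]
  · refine ENNReal.tsum_eq_zero.mpr fun C => if_neg fun hBC => hAB ?_
    exact hBC ▸ le_add_right le_rfl

theorem map_singleton_add_apply (μ : PMF (Multiset α)) (y : α) (B : Multiset α) :
    μ.map (({y} : Multiset α) + ·) B = if y ∈ B then μ (B.erase y) else 0 := by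
  simp only [map_add_left_apply, singleton_le, sub_singleton]

theorem map_singleton_bind_map_add_apply (ν : PMF α) (μ : PMF (Multiset α)) (B : Multiset α) :
    ((ν.map fun y => {y}).bind fun A => μ.map (A + ·)) B =
      ∑ y ∈ B.toFinset, ν y * μ (B.erase y) := by
  rw [bind_map, bind_apply, tsum_eq_sum fun y hy => ?_]
  · refine Finset.sum_congr rfl fun y hy => ?_
    rw [Function.comp_apply, map_singleton_add_apply, if_pos (mem_toFinset.mp hy)]
  · rw [Function.comp_apply, map_singleton_add_apply, if_neg (mt mem_toFinset.mpr hy), mul_zero]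

end PMF

section BallsIntoBins

variable {α : Type*}

theorem repeatMultiset_add (ν : PMF (Multiset α)) (a b : ℕ) :
    repeatMultiset ν (a + b) =
      (repeatMultiset ν a).bind fun A => (repeatMultiset ν b).map (A + ·) := by
  induction a with
  | zero =>
    rw [zero_add, repeatMultiset, PMF.pure_bind]
    simp only [zero_add]
    exact (PMF.map_id _).symm
  | succ a ih =>
    rw [Nat.succ_add, repeatMultiset, repeatMultiset, ih, PMF.bind_bind]
    refine congrArg _ (funext fun s => ?_)
    rw [PMF.map_bind, PMF.bind_map]
    refine congrArg _ (funext fun A => ?_)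
    rw [Function.comp_apply, PMF.map_comp]
    simp only [Function.comp_def, add_assoc]

variable [DecidableEq α]

theorem repeatMultiset_map_singleton_succ_apply (ν : PMF α) (t : ℕ) (B : Multiset α) :
    repeatMultiset (ν.map fun y => {y}) (t + 1) B =
      ∑ y ∈ B.toFinset, ν y * repeatMultiset (ν.map fun y => {y}) t (B.erase y) := by
  rw [repeatMultiset, PMF.map_singleton_bind_map_add_apply]

theorem repeatMultiset_map_singleton_apply (ν : PMF α) (t : ℕ) (B : Multiset α) :
    repeatMultiset (ν.map fun y => {y}) t B =
      if card B = t then B.countPerms * (B.map ν).prod else 0 := by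
  induction t generalizing B with
  | zero =>
    rw [repeatMultiset, PMF.pure_apply]
    rcases eq_or_ne B 0 with rfl | hB
    · simp
    · simp [hB]
  | succ t ih =>
    rw [repeatMultiset_map_singleton_succ_apply]
    split_ifs with hB
    · have hterm : ∀ y ∈ B.toFinset,
          ν y * repeatMultiset (ν.map fun y => {y}) t (B.erase y) =
            (B.erase y).countPerms * (B.map ν).prod := by
        intro y hy
        rw [ih, if_pos (by rw [card_erase_of_mem (mem_toFinset.mp hy), hB]; rfl), mul_left_comm,
          prod_map_erase (mem_toFinset.mp hy)]
      rw [Finset.sum_congr rfl hterm, ← Finset.sum_mul, ← Nat.cast_sum,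
        sum_countPerms_erase (card_pos.mp (hB ▸ t.succ_pos))]
    · refine Finset.sum_eq_zero fun y hy => ?_
      have hpos := card_pos_iff_exists_mem.mpr ⟨y, mem_toFinset.mp hy⟩
      rw [ih, if_neg (by rw [card_erase_of_mem (mem_toFinset.mp hy), Nat.pred_eq_sub_one]; omega),
        mul_zero]

theorem trialM_bind_map_add_apply (ν : PMF α) (p : ℝ≥0∞) (hp : p ≤ 1) (μ : PMF (Multiset α))
    (B : Multiset α) :
    ((trialM ν p hp).bind fun A => μ.map (A + ·)) B =
      p * ∑ y ∈ B.toFinset, ν y * μ (B.erase y) + (1 - p) * μ B := by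
  rw [trialM, PMF.bind_bind, PMF.bind_apply, tsum_bool, add_comm]
  simp only [bernoulliENNReal, PMF.ofFintype_apply, cond_true, cond_false, if_true,
    Bool.false_eq_true, if_false, PMF.pure_bind, zero_add, PMF.map_singleton_bind_map_add_apply]
  rw [show (fun C : Multiset α => C) = id from rfl, PMF.map_id]

theorem repeatMultiset_trialM_apply (ν : PMF α) (p : ℝ≥0∞) (hp : p ≤ 1) (n : ℕ)
    (B : Multiset α) :
    repeatMultiset (trialM ν p hp) n B =
      n.choose (card B) * p ^ card B * (1 - p) ^ (n - card B) *
        repeatMultiset (ν.map fun y => {y}) (card B) B := by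
  induction n generalizing B with
  | zero =>
    rw [repeatMultiset, PMF.pure_apply]
    rcases eq_or_ne B 0 with rfl | hB
    · simp [repeatMultiset]
    · simp [hB, Nat.choose_eq_zero_of_lt (card_pos.mpr hB)]
  | succ n ih =>
    rw [repeatMultiset, trialM_bind_map_add_apply, ih B]
    rcases eq_or_ne B 0 with rfl | hB
    · simp only [toFinset_zero, Finset.sum_empty, mul_zero, card_zero, zero_add,
        Nat.choose_zero_right, pow_zero, Nat.sub_zero, pow_succ]
      ring
    obtain ⟨j, hj⟩ := Nat.exists_eq_add_one_of_ne_zero (card_eq_zero.not.mpr hB)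
    have hterm : ∀ y ∈ B.toFinset, ν y * repeatMultiset (trialM ν p hp) n (B.erase y) =
        n.choose j * p ^ j * (1 - p) ^ (n - j) *
          (ν y * repeatMultiset (ν.map fun y => {y}) j (B.erase y)) := by
      intro y hy
      rw [ih, card_erase_of_mem (mem_toFinset.mp hy), hj, Nat.pred_succ]
      ring
    rw [Finset.sum_congr rfl hterm, ← Finset.mul_sum, ← repeatMultiset_map_singleton_succ_apply,
      hj, Nat.add_sub_add_right, ← choose_succ_succ_mul_pow_mul_pow]
    ring

theorem repeatMultiset_bind_trialM_apply (ν : PMF α) (p : ℝ≥0∞) (hp : p ≤ 1) (k n : ℕ)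
    (B : Multiset α) (hk : k ≤ card B) :
    ((repeatMultiset (ν.map fun y => {y}) k).bind fun A =>
        (repeatMultiset (trialM ν p hp) n).map (A + ·)) B =
      n.choose (card B - k) * p ^ (card B - k) * (1 - p) ^ (n - (card B - k)) *
        repeatMultiset (ν.map fun y => {y}) (card B) B := by
  set j := card B - k
  set c : ℝ≥0∞ := n.choose j * p ^ j * (1 - p) ^ (n - j)
  have hterm : ∀ A : Multiset α,
      repeatMultiset (ν.map fun y => {y}) k A *
          ((repeatMultiset (trialM ν p hp) n).map (A + ·)) B =
        c * (repeatMultiset (ν.map fun y => {y}) k A *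
          ((repeatMultiset (ν.map fun y => {y}) j).map (A + ·)) B) := by
    intro A
    rw [PMF.map_add_left_apply, PMF.map_add_left_apply]
    split_ifs with hAB
    · rcases eq_or_ne (card A) k with hA | hA
      · rw [repeatMultiset_trialM_apply, card_sub hAB, hA]
        ring
      · rw [repeatMultiset_map_singleton_apply ν k A, if_neg hA]
        ring
    · ring
  rw [PMF.bind_apply, tsum_congr hterm, ENNReal.tsum_mul_left, ← PMF.bind_apply,
    ← repeatMultiset_add, Nat.add_sub_cancel' hk]

end BallsIntoBins

theorem prod_map_uniformBin {m : ℕ} (hm : 0 < m) (B : Multiset (Fin m)) :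
    (B.map (uniformBin m hm)).prod = (m : ℝ≥0∞)⁻¹ ^ card B := by
  have huniform : ∀ y : Fin m, uniformBin m hm y = (m : ℝ≥0∞)⁻¹ := fun y => by
    simp [uniformBin, PMF.uniformOfFinset_apply]
  rw [map_congr rfl fun y _ => huniform y, map_const', prod_replicate]

theorem MBIB_apply (m k n : ℕ) (hm : 0 < m) (p : ℝ≥0∞) (hp : p ≤ 1) (S : Finset (Fin m))
    (hS : S.Nonempty) (B : Multiset (Fin m)) (hB : k + 1 ≤ card B) :
    MBIB m k n hm p hp S hS B =
      (S.card : ℝ≥0∞)⁻¹ *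
        (n.choose (card B - 1 - k) * p ^ (card B - 1 - k) * (1 - p) ^ (n - (card B - 1 - k))) *
        (m : ℝ≥0∞)⁻¹ ^ (card B - 1) *
        ((∑ x ∈ S ∩ B.toFinset, (B.erase x).countPerms : ℕ) : ℝ≥0∞) := by
  set balls := repeatMultiset ((uniformBin m hm).map fun y => {y})
  set trials := repeatMultiset (trialM (uniformBin m hm) p hp)
  have hshift : ∀ x : Fin m,
      (balls k).bind (fun A => (trials n).map fun C => {x} + A + C) =
        ((balls k).bind fun A => (trials n).map (A + ·)).map (({x} : Multiset (Fin m)) + ·) := by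
    intro x
    rw [PMF.map_bind]
    simp only [PMF.map_comp, Function.comp_def, add_assoc]
  have hterm : ∀ x ∈ S, PMF.uniformOfFinset S hS x *
      ((balls k).bind fun A => (trials n).map fun C => {x} + A + C) B =
        (S.card : ℝ≥0∞)⁻¹ *
          (n.choose (card B - 1 - k) * p ^ (card B - 1 - k) * (1 - p) ^ (n - (card B - 1 - k))) *
          (m : ℝ≥0∞)⁻¹ ^ (card B - 1) *
          if x ∈ B.toFinset then ((B.erase x).countPerms : ℝ≥0∞) else 0 := by
    intro x hx
    rw [hshift, PMF.map_singleton_add_apply, PMF.uniformOfFinset_apply_of_mem hS hx]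
    simp only [mem_toFinset]
    split_ifs with hxB
    · have hcard : card (B.erase x) = card B - 1 := by
        rw [card_erase_of_mem hxB, Nat.pred_eq_sub_one]
      rw [repeatMultiset_bind_trialM_apply _ _ _ _ _ _ (by omega),
        repeatMultiset_map_singleton_apply, if_pos rfl, prod_map_uniformBin, hcard,
        Nat.sub_right_comm]
      ring
    · simp
  rw [MBIB, PMF.bind_apply, tsum_eq_sum fun x hx => by
      rw [PMF.uniformOfFinset_apply_of_notMem hS hx, zero_mul],
    Finset.sum_congr rfl hterm, ← Finset.mul_sum, Finset.sum_ite_mem, Nat.cast_sum]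

theorem stmt7_general (m s k n : ℕ) (hm : 0 < m) (hs : 0 < s)
    (p : ℝ) (hp0 : 0 ≤ p) (hp1 : p ≤ 1)
    (S : Finset (Fin m)) (hScard : S.card = s)
    (W : Fin m → ℕ) (w : ℕ) (hw : w = ∑ i, W i) (hkw : 1 + k ≤ w) :
    (((MBIB m k n hm (ENNReal.ofReal p) (ENNReal.ofReal_le_one.mpr hp1) S
        (Finset.card_pos.mp (hScard ▸ hs))).map (fun o i => o.count i)) W).toReal =
      (n.choose (w - 1 - k) : ℝ) * p ^ (w - 1 - k) * (1 - p) ^ (n - (w - 1 - k)) *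
        (((w - 1).factorial : ℝ) / (s * ∏ i, ((W i).factorial : ℝ))) / (m : ℝ) ^ (w - 1) *
        (∑ i ∈ S, W i : ℕ) := by
  obtain ⟨B, rfl⟩ : ∃ B : Multiset (Fin m), W = fun i => B.count i :=
    ⟨(Finsupp.equivFunOnFinite.symm W).toMultiset, by ext; simp⟩
  beta_reduce
  have hcard : card B = w := by rw [hw, sum_count_eq_card fun i _ => Finset.mem_univ i]
  have hperms : ((∑ x ∈ S ∩ B.toFinset, (B.erase x).countPerms : ℕ) : ℝ) =
      (w - 1).factorial * (∑ i ∈ S, B.count i : ℕ) / ∏ i, ((B.count i).factorial : ℝ) := by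
    rw [eq_div_iff (by positivity), ← hcard]
    exact_mod_cast B.sum_countPerms_erase_mul_prod_factorial S (Finset.subset_univ _)
  rw [show (fun i => B.count i) = (fun o i => o.count i) B from rfl, PMF.map_apply_of_injective _
      (fun o o' h => Multiset.ext.mpr (congrFun h)), MBIB_apply _ _ _ _ _ _ _ _ _ (by omega),
    hcard, hScard]
  simp only [ENNReal.toReal_mul, ENNReal.toReal_inv, ENNReal.toReal_pow, ENNReal.toReal_natCast,
    ENNReal.toReal_ofReal hp0, ENNReal.toReal_sub_of_le (ENNReal.ofReal_le_one.mpr hp1)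
      ENNReal.one_ne_top, ENNReal.toReal_one, hperms, inv_pow]
  field_simp

theorem stmt7 (m s k n : ℕ) (hm : 0 < m) (hs : 0 < s) (hk : 0 < k) (hn : 0 < n) (hsm : s ≤ m)
    (p : ℝ) (hp0 : 0 ≤ p) (hp1 : p ≤ 1)
    (S : Finset (Fin m)) (hScard : S.card = s)
    (W : Fin m → ℕ) (w : ℕ) (hw : w = ∑ i, W i) (hkw : 1 + k ≤ w) (hwkn : w ≤ 1 + k + n) :
    (((MBIB m k n hm (ENNReal.ofReal p) (ENNReal.ofReal_le_one.mpr hp1) S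
        (Finset.card_pos.mp (hScard ▸ hs))).map (fun o i => o.count i)) W).toReal =
      (n.choose (w - 1 - k) : ℝ) * p ^ (w - 1 - k) * (1 - p) ^ (n - (w - 1 - k)) *
        (((w - 1).factorial : ℝ) / (s * ∏ i, ((W i).factorial : ℝ))) / (m : ℝ) ^ (w - 1) *
        (∑ i ∈ S, W i : ℕ) :=
  stmt7_general m s k n hm hs p hp0 hp1 S hScard W w hw hkw
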